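/- arXiv:1607.01334 — 6 statements merged into one kernel-verified Lean document; each statement's English description precedes it below -/
import Mathlib

section
/- Fix d ≥ 1, N = 2^d, α > 0, positive reals (δ_ω)_{ω∈Ω} with |Ω| = N, and f > 0. Let ℓ_{3/2} = (2/3)·log₂((1/N)·∑_ω δ_ω^{3/2}) and q = -(α+d)/3 - ℓ_{3/2}/2. Then the sequence u defined on the N-ary tree J by u_j = f·2^{q·|j|+q}·∏_{k ≤ j, k≠∅} √(d_k) (with d_k = δ_{last letter of k}) satisfies the stationarity recursion d_j·u_{\bar j}² = 2^α·∑_{k ∈ O_j} d_k·u_j·u_k for all nodes j, where \bar j is the parent of j, O_j its children, u_{\bar ∅} := f, and d_∅ := 1. -/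
open Finset Real

/-- **The explicit constant solution of the RCM satisfies the stationarity recursion.**
Words over `Ω` (with `|Ω| = N = 2^d`) encode the nodes of the `N`-ary tree `J`; the
parent of a nonempty word is obtained by dropping the last letter, the children of `j`
are the words `j ++ [ω]`, and the coefficient of a nonempty node is `δ` of its last
letter (`d_∅ = 1`, `u_{\bar ∅} = f`).  With
`ℓ_{3/2} = (2/3)·log₂((1/N)·∑ δ_ω^{3/2})` and `q = -(α+d)/3 - ℓ_{3/2}/2`, the sequence
`u_j = f·2^{q|j|+q}·∏_{k ≤ j, k ≠ ∅} √(d_k)` satisfies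
`d_j·u_{\bar j}² = 2^α·∑_{k ∈ O_j} d_k·u_j·u_k` for every node `j`. -/
theorem RCM_constant_solution_recursion {Ω : Type*} [Fintype Ω]
    (d : ℕ) (hd : 1 ≤ d) (hcard : Fintype.card Ω = 2 ^ d)
    (α : ℝ) (hα : 0 < α) (δ : Ω → ℝ) (hδ : ∀ ω, 0 < δ ω) (f : ℝ) (hf : 0 < f)
    (ℓ32 q : ℝ)
    (hℓ32 : ℓ32 = (2 / 3) * logb 2 ((1 / (2 ^ d : ℝ)) * ∑ ω, δ ω ^ ((3 : ℝ) / 2)))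
    (hq : q = -(α + d) / 3 - ℓ32 / 2)
    (u : List Ω → ℝ)
    (hu : ∀ j : List Ω,
      u j = f * (2 : ℝ) ^ (q * j.length + q) * (j.map fun ω => Real.sqrt (δ ω)).prod)
    (dcoef : List Ω → ℝ)
    (hdcoef : ∀ (j : List Ω) (h : j ≠ []), dcoef j = δ (j.getLast h))
    (hdnil : dcoef [] = 1)
    (ubar : List Ω → ℝ)
    (hubar : ∀ (j : List Ω), j ≠ [] → ubar j = u j.dropLast)
    (hubarnil : ubar [] = f) :
    ∀ j : List Ω,
      dcoef j * (ubar j) ^ 2 = (2 : ℝ) ^ α * ∑ ω : Ω, δ ω * u j * u (j ++ [ω]) := by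
  intro j
  have h2 : (0:ℝ) < 2 := two_pos
  have hne : Nonempty Ω := by
    rw [← Fintype.card_pos_iff, hcard]; positivity
  set S : ℝ := ∑ ω, δ ω ^ ((3:ℝ)/2) with hSdef
  have hSpos : 0 < S := Finset.sum_pos (fun ω _ => Real.rpow_pos_of_pos (hδ ω) _)
    Finset.univ_nonempty
  have hSkey : (2:ℝ) ^ (α + 3*q) * S = 1 := by
    have hlogpow : Real.logb 2 ((2:ℝ)^d) = d := by
      rw [Real.logb_pow]
      simp [Real.logb_self_eq_one]
    have hlog : Real.logb 2 ((1/(2^d:ℝ)) * S) = Real.logb 2 S - d := by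
      rw [Real.logb_mul (by positivity) (ne_of_gt hSpos), one_div, Real.logb_inv, hlogpow]
      ring
    have hexp : α + 3*q = -Real.logb 2 S := by
      rw [hq, hℓ32, hlog]; ring
    rw [hexp, Real.rpow_neg (le_of_lt h2), Real.rpow_logb h2 (by norm_num) hSpos]
    field_simp
  set n : ℕ := j.length with hn
  set P : ℝ := (j.map fun ω => Real.sqrt (δ ω)).prod with hPdef
  have hRHS : (2:ℝ)^α * ∑ ω, δ ω * u j * u (j ++ [ω]) = f^2 * P^2 * (2:ℝ)^(2*q*n) := by
    have hterm : ∀ ω : Ω, δ ω * u j * u (j ++ [ω])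
        = δ ω ^ ((3:ℝ)/2) * (f^2 * P^2 * ((2:ℝ)^(q*(n:ℝ)+q) * (2:ℝ)^(q*((n:ℝ)+1)+q))) := by
      intro ω
      have h32 : δ ω ^ ((3:ℝ)/2) = δ ω * Real.sqrt (δ ω) := by
        rw [show (3:ℝ)/2 = 1 + 1/2 by norm_num, Real.rpow_add (hδ ω), Real.rpow_one,
          Real.sqrt_eq_rpow]
      rw [hu j, hu (j ++ [ω])]
      simp only [List.length_append, List.length_singleton, List.map_append, List.map_cons,
        List.map_nil, List.prod_append, List.prod_cons, List.prod_nil, ← hPdef, ← hn]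
      push_cast
      rw [h32]
      ring
    rw [Finset.sum_congr rfl (fun ω _ => hterm ω), ← Finset.sum_mul, ← hSdef]
    rw [← Real.rpow_add h2]
    have : q*(n:ℝ)+q + (q*((n:ℝ)+1)+q) = 2*q*(n:ℝ) + 3*q := by ring
    rw [this]
    have hsplit : (2:ℝ)^(2*q*(n:ℝ) + 3*q) = (2:ℝ)^(3*q) * (2:ℝ)^(2*q*(n:ℝ)) := by
      rw [← Real.rpow_add h2]; ring_nf
    have hcomb : (2:ℝ)^α * (2:ℝ)^(3*q) = (2:ℝ)^(α+3*q) := by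
      rw [← Real.rpow_add h2]
    calc (2:ℝ)^α * (S * (f^2 * P^2 * (2:ℝ)^(2*q*(n:ℝ) + 3*q)))
        = ((2:ℝ)^α * (2:ℝ)^(3*q)) * S * (f^2 * P^2 * (2:ℝ)^(2*q*(n:ℝ))) := by
          rw [hsplit]; ring
      _ = f^2 * P^2 * (2:ℝ)^(2*q*(n:ℝ)) := by rw [hcomb, hSkey]; ring
  rw [hRHS]
  rcases List.eq_nil_or_concat j with rfl | ⟨l, a, rfl⟩
  · simp only [hdnil, hubarnil, hPdef, List.map_nil, List.prod_nil, hn, List.length_nil,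
      Nat.cast_zero]
    norm_num
  · simp only [List.concat_eq_append] at hn hPdef hRHS ⊢
    have hne' : l ++ [a] ≠ [] := by simp
    rw [hdcoef _ hne', hubar _ hne', List.dropLast_concat, List.getLast_concat, hu l]
    have hPl : P = (l.map fun ω => Real.sqrt (δ ω)).prod * Real.sqrt (δ a) := by
      rw [hPdef]; simp
    have hnl : (n:ℝ) = (l.length:ℝ) + 1 := by
      rw [hn]; simp
    rw [hPl, hnl]
    have hsq : Real.sqrt (δ a) ^ 2 = δ a := Real.sq_sqrt (le_of_lt (hδ a))
    have hpow : ((2:ℝ)^(q*(l.length:ℝ)+q))^2 = (2:ℝ)^(2*q*((l.length:ℝ)+1)) := by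
      rw [← Real.rpow_natCast ((2:ℝ)^(q*(l.length:ℝ)+q)) 2, ← Real.rpow_mul (le_of_lt h2)]
      norm_num; ring_nf
    calc δ a * (f * 2^(q*(l.length:ℝ)+q) * (l.map fun ω => Real.sqrt (δ ω)).prod)^2
        = δ a * f^2 * ((2:ℝ)^(q*(l.length:ℝ)+q))^2 * ((l.map fun ω => Real.sqrt (δ ω)).prod)^2 := by
          ring
      _ = f^2 * ((l.map fun ω => Real.sqrt (δ ω)).prod * Real.sqrt (δ a))^2 *
            (2:ℝ)^(2*q*((l.length:ℝ)+1)) := by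
          rw [hpow]; rw [mul_pow _ (Real.sqrt (δ a)), hsq]; ring
end

section
/- With the setup of the repeated-coefficients model (RCM): d ≥ 1, N = 2^d, α > 0, positive (δ_ω)_{ω∈Ω}, |Ω| = N, ℓ_s the log-s-norm, q = -(α+d)/3 - ℓ_{3/2}/2, and u_j = f·2^{q|j|+q}·∏_{k≤j} √(d_k), for any p ≥ 1 and s ∈ ℝ, the norm ‖u‖_{W^{s,p}}^p := ∑_{j∈J} 2^{ps|j|}·2^{d(p/2−1)|j|}·|u_j|^p is finite if and only if s < s₀(p), where s₀(p) = (1/3)(α − d/2) + (1/2)(ℓ_{3/2} − ℓ_{p/2}). -/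
open Finset Real

private lemma summable_list_prod_iff {Ω : Type*} [Fintype Ω] (w : Ω → ℝ) (hw : ∀ ω, 0 < w ω) :
    Summable (fun j : List Ω => (j.map w).prod) ↔ ∑ ω, w ω < 1 := by
  classical
  rw [← (List.equivSigmaTuple (α := Ω)).symm.summable_iff]
  have hfun : ((fun j : List Ω => (j.map w).prod) ∘ (List.equivSigmaTuple (α := Ω)).symm)
      = fun x : Σ n, Fin n → Ω => ∏ i, w (x.2 i) := by
    funext x
    simp [List.equivSigmaTuple, Function.comp, List.map_ofFn, List.prod_ofFn]
  rw [hfun]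
  rw [summable_sigma_of_nonneg (fun x => Finset.prod_nonneg fun i _ => (hw _).le)]
  have h1 : ∀ n : ℕ, Summable fun x : Fin n → Ω => ∏ i, w (x i) := fun n =>
    summable_of_finite_support (Set.toFinite _)
  have h2 : ∀ n : ℕ, (∑' x : Fin n → Ω, ∏ i, w (x i)) = (∑ ω, w ω) ^ n := by
    intro n
    rw [tsum_fintype, ← Fintype.piFinset_univ, ← Finset.prod_univ_sum]
    simp
  simp only [h2]
  constructor
  · rintro ⟨-, h⟩
    have := summable_geometric_iff_norm_lt_one.mp h
    rwa [Real.norm_eq_abs, abs_of_nonneg (Finset.sum_nonneg fun ω _ => (hw ω).le)] at this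
  · intro h
    exact ⟨h1, summable_geometric_of_lt_one (Finset.sum_nonneg fun ω _ => (hw ω).le) h⟩

private lemma list_sqrt_prod_rpow {Ω : Type*} (δ : Ω → ℝ) (hδ : ∀ ω, 0 < δ ω) (p : ℝ) :
    ∀ j : List Ω, ((j.map fun ω => Real.sqrt (δ ω)).prod) ^ p
      = (j.map fun ω => δ ω ^ (p / 2)).prod := by
  intro j
  induction j with
  | nil => simp
  | cons a l ih =>
    have hl : 0 ≤ ((l.map fun ω => Real.sqrt (δ ω)).prod) := by
      apply List.prod_nonneg
      simp only [List.mem_map]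
      rintro x ⟨ω, -, rfl⟩
      exact Real.sqrt_nonneg _
    rw [List.map_cons, List.prod_cons, Real.mul_rpow (Real.sqrt_nonneg _) hl, ih,
      List.map_cons, List.prod_cons]
    congr 1
    rw [Real.sqrt_eq_rpow, ← Real.rpow_mul (hδ a).le]
    ring_nf

private lemma list_map_mul_const {Ω : Type*} (b : ℝ) (g : Ω → ℝ) (j : List Ω) :
    (j.map fun ω => b * g ω).prod = b ^ j.length * (j.map g).prod := by
  induction j with
  | nil => simp
  | cons a l ih => simp [ih, pow_succ]; ring

/-- **Sharp `W^{s,p}`-regularity of the constant RCM solution.**  With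
`ℓ_s = (1/s)·log₂((1/N)·∑ δ_ω^s)` (`N = 2^d`), `q = -(α+d)/3 - ℓ_{3/2}/2` and
`u_j = f·2^{q|j|+q}·∏_{k ≤ j} √(d_k)` on the `N`-ary tree of words over `Ω`,
for every `p ≥ 1` and `s ∈ ℝ` the norm
`‖u‖_{W^{s,p}}^p = ∑_j 2^{ps|j|}·2^{d(p/2-1)|j|}·|u_j|^p` is finite (i.e. the family
is summable) if and only if `s < s₀(p) = (1/3)(α - d/2) + (1/2)(ℓ_{3/2} - ℓ_{p/2})`. -/
theorem RCM_Wsp_regularity {Ω : Type*} [Fintype Ω]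
    (d : ℕ) (hd : 1 ≤ d) (hcard : Fintype.card Ω = 2 ^ d)
    (α : ℝ) (hα : 0 < α) (δ : Ω → ℝ) (hδ : ∀ ω, 0 < δ ω) (f : ℝ) (hf : 0 < f)
    (ℓ : ℝ → ℝ)
    (hℓ : ∀ t : ℝ, t ≠ 0 → ℓ t = (1 / t) * logb 2 ((1 / (2 ^ d : ℝ)) * ∑ ω, δ ω ^ t))
    (q : ℝ) (hq : q = -(α + d) / 3 - ℓ (3 / 2) / 2)
    (u : List Ω → ℝ)
    (hu : ∀ j : List Ω,
      u j = f * (2 : ℝ) ^ (q * j.length + q) * (j.map fun ω => Real.sqrt (δ ω)).prod)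
    (p s : ℝ) (hp : 1 ≤ p) :
    Summable (fun j : List Ω =>
        (2 : ℝ) ^ (p * s * j.length) * (2 : ℝ) ^ ((d : ℝ) * (p / 2 - 1) * j.length)
          * |u j| ^ p) ↔
      s < (1 / 3) * (α - (d : ℝ) / 2) + (1 / 2) * (ℓ (3 / 2) - ℓ (p / 2)) := by
  have hp0 : (0 : ℝ) < p := lt_of_lt_of_le one_pos hp
  have h2 : (0 : ℝ) < 2 := two_pos
  set E : ℝ := p * s + d * (p / 2 - 1) + p * q with hE
  set S : ℝ := ∑ ω, δ ω ^ (p / 2) with hS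
  set b : ℝ := (2 : ℝ) ^ E with hb
  set C : ℝ := f ^ p * (2 : ℝ) ^ (p * q) with hC
  have hbpos : 0 < b := Real.rpow_pos_of_pos h2 _
  have hCpos : 0 < C := mul_pos (Real.rpow_pos_of_pos hf _) (Real.rpow_pos_of_pos h2 _)
  have hΩ : Nonempty Ω := by
    rw [← Fintype.card_pos_iff, hcard]; positivity
  have hSpos : 0 < S := Finset.sum_pos (fun ω _ => Real.rpow_pos_of_pos (hδ ω) _) univ_nonempty
  -- rewrite the summand
  have upos : ∀ j : List Ω, 0 < u j := by
    intro j
    rw [hu j]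
    refine mul_pos (mul_pos hf (Real.rpow_pos_of_pos h2 _)) (List.prod_pos ?_)
    simp only [List.mem_map]
    rintro x ⟨ω, -, rfl⟩
    exact Real.sqrt_pos.mpr (hδ ω)
  have key : ∀ j : List Ω,
      (2 : ℝ) ^ (p * s * j.length) * (2 : ℝ) ^ ((d : ℝ) * (p / 2 - 1) * j.length)
        * |u j| ^ p
      = C * (j.map fun ω => b * δ ω ^ (p / 2)).prod := by
    intro j
    have hprodnn : 0 ≤ ((j.map fun ω => Real.sqrt (δ ω)).prod) := by
      apply List.prod_nonneg
      simp only [List.mem_map]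
      rintro x ⟨ω, -, rfl⟩
      exact Real.sqrt_nonneg _
    rw [abs_of_pos (upos j), hu j,
      Real.mul_rpow (mul_pos hf (Real.rpow_pos_of_pos h2 _)).le hprodnn,
      Real.mul_rpow hf.le (Real.rpow_pos_of_pos h2 _).le,
      list_sqrt_prod_rpow δ hδ p j,
      ← Real.rpow_mul h2.le,
      list_map_mul_const, hb, ← Real.rpow_natCast ((2:ℝ) ^ E) j.length,
      ← Real.rpow_mul h2.le]
    rw [show (2:ℝ) ^ (p * s * (j.length:ℝ)) * (2:ℝ) ^ ((d:ℝ) * (p / 2 - 1) * (j.length:ℝ)) *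
          (f ^ p * (2:ℝ) ^ ((q * (j.length:ℝ) + q) * p) *
            (j.map fun ω => δ ω ^ (p / 2)).prod)
        = f ^ p * ((2:ℝ) ^ (p * s * (j.length:ℝ)) * (2:ℝ) ^ ((d:ℝ) * (p / 2 - 1) * (j.length:ℝ))
            * (2:ℝ) ^ ((q * (j.length:ℝ) + q) * p)) * (j.map fun ω => δ ω ^ (p / 2)).prod
        by ring]
    rw [← Real.rpow_add h2, ← Real.rpow_add h2, hC]
    rw [show p * s * (j.length:ℝ) + (d:ℝ) * (p / 2 - 1) * (j.length:ℝ)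
          + (q * (j.length:ℝ) + q) * p = p * q + E * (j.length:ℝ) by rw [hE]; ring]
    rw [Real.rpow_add h2]
    ring
  simp only [key]
  rw [summable_mul_left_iff (ne_of_gt hCpos)]
  rw [summable_list_prod_iff _ (fun ω => mul_pos hbpos (Real.rpow_pos_of_pos (hδ ω) _))]
  rw [← Finset.mul_sum, ← hS]
  -- now reduce `b * S < 1` to the inequality on `s`
  have hbS : 0 < b * S := mul_pos hbpos hSpos
  rw [← Real.logb_neg_iff (by norm_num : (1:ℝ) < 2) hbS]
  rw [Real.logb_mul (ne_of_gt hbpos) (ne_of_gt hSpos), hb,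
    Real.logb_rpow h2 (by norm_num : (2:ℝ) ≠ 1)]
  -- compute logb 2 S from ℓ (p/2)
  have hL : logb 2 S = p / 2 * ℓ (p / 2) + d := by
    have hpd : (p : ℝ) / 2 ≠ 0 := by positivity
    have := hℓ (p / 2) hpd
    have hlog : logb 2 ((1:ℝ) / 2 ^ d) = -(d : ℝ) := by
      rw [one_div, Real.logb_inv, ← Real.rpow_natCast 2 d,
        Real.logb_rpow h2 (by norm_num : (2:ℝ) ≠ 1)]
    rw [Real.logb_mul (by positivity) (ne_of_gt hSpos), hlog] at this
    rw [this]
    field_simp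
    ring
  rw [hL, hE, hq]
  constructor
  · intro h
    nlinarith [h, hp0]
  · intro h
    have := mul_pos hp0 (sub_pos.mpr h)
    nlinarith [this]
end

section
/- Let J be the N-ary tree (N ≥ 2) and suppose p, q : J → ℝ both satisfy, for every node j, ∑_{k ∈ O_j} d_k^{3/2}·2^{q_k + 2q_j} = 2^{-α} and ∑_{k ∈ O_j} d_k^{3/2}·2^{p_k + 2p_j} = 2^{-α}, where d_k > 0 and O_j denotes the N children of j. If p ≠ q, then, after possibly exchanging p and q, there exists a sequence of nodes j_0 < j_1 < j_2 < ... with |j_{n+1}| = |j_n| + 1 and p_{j_0} − q_{j_0} > 0 such that for all even n, ∑_{i=0}^{n} (p_{j_i} − q_{j_i}) ≥ 2^{n−1}·(p_{j_0} − q_{j_0}); in particular |p_{j_n} − q_{j_n}| grows at least like 2^n along this sequence. -/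
open Finset

private lemma exists_child_le {Ω : Type*} [Fintype Ω] (hc : Nonempty Ω)
    (c : Ω → ℝ) (hcpos : ∀ ω, 0 < c ω) (a b : Ω → ℝ)
    (h : ∑ ω, c ω * (2 : ℝ) ^ (a ω) ≤ ∑ ω, c ω * (2 : ℝ) ^ (b ω)) :
    ∃ ω, a ω ≤ b ω := by
  by_contra hcon
  push_neg at hcon
  have : ∑ ω, c ω * (2 : ℝ) ^ (b ω) < ∑ ω, c ω * (2 : ℝ) ^ (a ω) := by
    apply Finset.sum_lt_sum_of_nonempty Finset.univ_nonempty
    intro ω _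
    exact mul_lt_mul_of_pos_left
      ((Real.rpow_lt_rpow_left_iff (by norm_num)).mpr (hcon ω)) (hcpos ω)
  linarith

private lemma aux_chain {Ω : Type*} [Fintype Ω]
    (hN : 2 ≤ Fintype.card Ω) (α : ℝ)
    (dcoef : List Ω → ℝ) (hdpos : ∀ j, 0 < dcoef j)
    (p q : List Ω → ℝ)
    (hq : ∀ j : List Ω, ∑ ω : Ω,
      dcoef (j ++ [ω]) ^ ((3 : ℝ) / 2) * (2 : ℝ) ^ (q (j ++ [ω]) + 2 * q j)
        = (2 : ℝ) ^ (-α))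
    (hp : ∀ j : List Ω, ∑ ω : Ω,
      dcoef (j ++ [ω]) ^ ((3 : ℝ) / 2) * (2 : ℝ) ^ (p (j ++ [ω]) + 2 * p j)
        = (2 : ℝ) ^ (-α))
    (j0 : List Ω) (h0 : 0 < p j0 - q j0) :
    ∃ j : ℕ → List Ω, (∀ n, ∃ ω : Ω, j (n + 1) = j n ++ [ω]) ∧
      0 < p (j 0) - q (j 0) ∧
      (∀ n : ℕ, Even n →
        (2 : ℝ) ^ ((n : ℤ) - 1) * (p (j 0) - q (j 0)) ≤
          ∑ i ∈ Finset.range (n + 1), (p (j i) - q (j i))) ∧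
      ∀ n : ℕ, (2 : ℝ) ^ n * (p (j 0) - q (j 0)) ≤ |p (j n) - q (j n)| := by
  have hc : Nonempty Ω := Fintype.card_pos_iff.mp (by omega)
  set f : List Ω → ℝ := fun j => p j - q j with hf
  -- existence of a low child
  have hlo : ∀ j : List Ω, ∃ ω : Ω, f (j ++ [ω]) ≤ -2 * f j := by
    intro j
    obtain ⟨ω, hω⟩ := exists_child_le hc
      (fun ω => dcoef (j ++ [ω]) ^ ((3 : ℝ) / 2))
      (fun ω => Real.rpow_pos_of_pos (hdpos _) _)
      (fun ω => p (j ++ [ω]) + 2 * p j)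
      (fun ω => q (j ++ [ω]) + 2 * q j)
      (le_of_eq ((hp j).trans (hq j).symm))
    exact ⟨ω, by simp only [hf]; linarith⟩
  have hhi : ∀ j : List Ω, ∃ ω : Ω, -2 * f j ≤ f (j ++ [ω]) := by
    intro j
    obtain ⟨ω, hω⟩ := exists_child_le hc
      (fun ω => dcoef (j ++ [ω]) ^ ((3 : ℝ) / 2))
      (fun ω => Real.rpow_pos_of_pos (hdpos _) _)
      (fun ω => q (j ++ [ω]) + 2 * q j)
      (fun ω => p (j ++ [ω]) + 2 * p j)
      (le_of_eq ((hq j).trans (hp j).symm))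
    exact ⟨ω, by simp only [hf]; linarith⟩
  choose flo hflo using hlo
  choose fhi hfhi using hhi
  set j : ℕ → List Ω := fun n =>
    Nat.rec j0 (fun n jn => jn ++ [if Even n then flo jn else fhi jn]) n with hj
  have hjsucc : ∀ n, j (n + 1) = j n ++ [if Even n then flo (j n) else fhi (j n)] :=
    fun n => rfl
  have hchain : ∀ n, ∃ ω : Ω, j (n + 1) = j n ++ [ω] := by
    intro n
    exact ⟨if Even n then flo (j n) else fhi (j n), hjsucc n⟩
  set ε : ℝ := f j0 with hε
  have hεd : ε = p j0 - q j0 := rfl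
  have hj0 : j 0 = j0 := rfl
  -- main invariant
  have key : ∀ n : ℕ, (Even n → (2 : ℝ) ^ n * ε ≤ f (j n)) ∧
      (¬ Even n → f (j n) ≤ -((2 : ℝ) ^ n * ε)) := by
    intro n
    induction n with
    | zero =>
      constructor
      · intro _; simp [hj0, hε]
      · intro h; exact absurd Even.zero h
    | succ n ih =>
      have h2 : (2 : ℝ) ^ (n + 1) = 2 ^ n * 2 := pow_succ 2 n
      by_cases hn : Even n
      · have hle : f (j (n + 1)) ≤ -2 * f (j n) := by
          rw [hjsucc n, if_pos hn]; exact hflo (j n)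
        have h1 := ih.1 hn
        constructor
        · intro hcon; exact absurd (Nat.even_add_one.mp hcon hn) (by simp)
        · intro _; nlinarith
      · have hle : -2 * f (j n) ≤ f (j (n + 1)) := by
          rw [hjsucc n, if_neg hn]; exact hfhi (j n)
        have h1 := ih.2 hn
        constructor
        · intro _; nlinarith
        · intro hcon; exact absurd (Nat.even_add_one.mpr hn) hcon
  -- absolute-value bound
  have habs : ∀ n : ℕ, (2 : ℝ) ^ n * ε ≤ |f (j n)| := by
    intro n
    by_cases hn : Even n
    · exact le_trans ((key n).1 hn) (le_abs_self _)
    · have := (key n).2 hn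
      calc (2 : ℝ) ^ n * ε ≤ -(f (j n)) := by linarith
        _ ≤ |f (j n)| := neg_le_abs _
  -- sum bound (multiplied by 2 to avoid zpow)
  have hsum2 : ∀ m : ℕ, (2 : ℝ) ^ (2 * m) * ε ≤
      2 * ∑ i ∈ Finset.range (2 * m + 1), f (j i) := by
    intro m
    induction m with
    | zero => simp [hj0, hεd, hf]; linarith [hεd ▸ h0]
    | succ m ih =>
      have e : 2 * (m + 1) + 1 = (2 * m + 1) + 1 + 1 := by ring
      rw [e, Finset.sum_range_succ, Finset.sum_range_succ]
      have hodd : ¬ Even (2 * m + 1) := by simp [Nat.even_add_one]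
      have h1 : f (j (2 * m + 1)) ≤ -((2 : ℝ) ^ (2 * m + 1) * ε) := (key _).2 hodd
      have hle : -2 * f (j (2 * m + 1)) ≤ f (j (2 * m + 2)) := by
        rw [show 2 * m + 2 = (2 * m + 1) + 1 from rfl, hjsucc (2 * m + 1), if_neg hodd]
        exact hfhi (j (2 * m + 1))
      have hpow1 : (2 : ℝ) ^ (2 * m + 1) = 2 ^ (2 * m) * 2 := pow_succ 2 (2 * m)
      have hpow2 : (2 : ℝ) ^ (2 * (m + 1)) = 2 ^ (2 * m) * 2 * 2 := by
        rw [show 2 * (m + 1) = 2 * m + 1 + 1 by ring, pow_succ, pow_succ]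
      have hε2 : (0 : ℝ) < 2 ^ (2 * m) * ε := by positivity
      nlinarith
  refine ⟨j, hchain, by simpa [hj0] using h0, ?_, by simpa [hj0] using habs⟩
  intro n hn
  obtain ⟨m, hm⟩ := hn
  have hn2 : n = 2 * m := by omega
  have h2S := hsum2 m
  rw [← hn2] at h2S
  have hz : (2 : ℝ) ^ ((n : ℤ) - 1) = 2 ^ n / 2 := by
    rw [zpow_sub₀ (two_ne_zero), zpow_natCast, zpow_one]
  rw [hz]
  rw [hεd] at h2S
  simp only [hj0, hf] at h2S ⊢
  rw [div_mul_eq_mul_div]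
  linarith

/-- **Divergence estimate for two solutions of the stationary recursion.**  If `p` and
`q` both satisfy, at every node `j` of the `N`-ary tree of words over `Ω`,
`∑_{k ∈ O_j} d_k^{3/2}·2^{p_k+2p_j} = 2^{-α} = ∑_{k ∈ O_j} d_k^{3/2}·2^{q_k+2q_j}`,
and `p ≠ q`, then there is a chain of nodes `j_0 < j_1 < j_2 < …`, each a child of the
previous, such that (after possibly exchanging `p` and `q`) `p_{j_0} - q_{j_0} > 0`,
for all even `n` one has `∑_{i=0}^n (p_{j_i} - q_{j_i}) ≥ 2^{n-1}·(p_{j_0}-q_{j_0})`,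
and `|p_{j_n} - q_{j_n}| ≥ 2^n·(p_{j_0}-q_{j_0})` for all `n`. -/
theorem stationary_recursion_divergence {Ω : Type*} [Fintype Ω]
    (hN : 2 ≤ Fintype.card Ω) (α : ℝ)
    (dcoef : List Ω → ℝ) (hdpos : ∀ j, 0 < dcoef j)
    (p q : List Ω → ℝ)
    (hq : ∀ j : List Ω, ∑ ω : Ω,
      dcoef (j ++ [ω]) ^ ((3 : ℝ) / 2) * (2 : ℝ) ^ (q (j ++ [ω]) + 2 * q j)
        = (2 : ℝ) ^ (-α))
    (hp : ∀ j : List Ω, ∑ ω : Ω,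
      dcoef (j ++ [ω]) ^ ((3 : ℝ) / 2) * (2 : ℝ) ^ (p (j ++ [ω]) + 2 * p j)
        = (2 : ℝ) ^ (-α))
    (hne : p ≠ q) :
    ∃ j : ℕ → List Ω, (∀ n, ∃ ω : Ω, j (n + 1) = j n ++ [ω]) ∧
      ((0 < p (j 0) - q (j 0) ∧
        (∀ n : ℕ, Even n →
          (2 : ℝ) ^ ((n : ℤ) - 1) * (p (j 0) - q (j 0)) ≤
            ∑ i ∈ Finset.range (n + 1), (p (j i) - q (j i))) ∧
        ∀ n : ℕ, (2 : ℝ) ^ n * (p (j 0) - q (j 0)) ≤ |p (j n) - q (j n)|) ∨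
       (0 < q (j 0) - p (j 0) ∧
        (∀ n : ℕ, Even n →
          (2 : ℝ) ^ ((n : ℤ) - 1) * (q (j 0) - p (j 0)) ≤
            ∑ i ∈ Finset.range (n + 1), (q (j i) - p (j i))) ∧
        ∀ n : ℕ, (2 : ℝ) ^ n * (q (j 0) - p (j 0)) ≤ |q (j n) - p (j n)|)) := by
  have hj0 : ∃ j0 : List Ω, p j0 ≠ q j0 := by
    by_contra h
    push_neg at h
    exact hne (funext h)
  obtain ⟨j0, hj0ne⟩ := hj0
  rcases lt_or_gt_of_ne hj0ne with hlt | hgt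
  · obtain ⟨j, hch, h1, h2, h3⟩ :=
      aux_chain hN α dcoef hdpos q p hp hq j0 (by linarith)
    exact ⟨j, hch, Or.inr ⟨h1, h2, h3⟩⟩
  · obtain ⟨j, hch, h1, h2, h3⟩ :=
      aux_chain hN α dcoef hdpos p q hq hp j0 (by linarith)
    exact ⟨j, hch, Or.inl ⟨h1, h2, h3⟩⟩
end

section
/- Suppose α > d/2 and the positive coefficients (d_j)_{j∈J} on the N-ary tree (N = 2^d) satisfy sup_j d_j / inf_j d_j ≤ 2^{(α − d/2)/3}. Define recursively, for fixed n, q^{(n)}_j = x for |j| = n and q^{(n)}_j = −α/2 − (1/2)·log₂(∑_{k∈O_j} d_k^{3/2}·2^{q^{(n)}_k}) for |j| < n. If x lies in the interval [a,b] with a = −(α+d)/3 − t + s/2 and b = −(α+d)/3 − s + t/2, where t = sup_j log₂ d_j and s = inf_j log₂ d_j, then q^{(n)}_j ∈ [a,b] for all nodes j with |j| ≤ n. -/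
open Finset Real

/-- **Invariant interval for the backwards (pull-back) recursion.**  On the `N`-ary
tree of words over `Ω` (`N = 2^d`), suppose `α > d/2`, the positive coefficients
satisfy `s ≤ log₂ d_j ≤ t` with `t - s ≤ (α - d/2)/3` (i.e. `sup d_j / inf d_j ≤
2^{(α-d/2)/3}`).  Fix `n` and let `q^{(n)}` be given by `q^{(n)}_j = x` for `|j| = n`
and `q^{(n)}_j = -α/2 - (1/2)·log₂(∑_{k ∈ O_j} d_k^{3/2}·2^{q^{(n)}_k})` for `|j| < n`.
If `x ∈ [a,b]` with `a = -(α+d)/3 - t + s/2` and `b = -(α+d)/3 - s + t/2`, then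
`q^{(n)}_j ∈ [a,b]` for every node `j` with `|j| ≤ n`. -/
theorem pullback_invariant_interval {Ω : Type*} [Fintype Ω]
    (d : ℕ) (hd : 1 ≤ d) (hcard : Fintype.card Ω = 2 ^ d)
    (α : ℝ) (hα : (d : ℝ) / 2 < α)
    (dcoef : List Ω → ℝ) (hdpos : ∀ j, 0 < dcoef j)
    (t s : ℝ) (ht : ∀ j, logb 2 (dcoef j) ≤ t) (hs : ∀ j, s ≤ logb 2 (dcoef j))
    (hratio : t - s ≤ (α - (d : ℝ) / 2) / 3)
    (n : ℕ) (x a b : ℝ)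
    (ha : a = -(α + d) / 3 - t + s / 2) (hb : b = -(α + d) / 3 - s + t / 2)
    (hx : x ∈ Set.Icc a b)
    (Q : List Ω → ℝ)
    (hQtop : ∀ j : List Ω, j.length = n → Q j = x)
    (hQrec : ∀ j : List Ω, j.length < n →
      Q j = -α / 2 - (1 / 2) * logb 2
        (∑ ω : Ω, dcoef (j ++ [ω]) ^ ((3 : ℝ) / 2) * (2 : ℝ) ^ Q (j ++ [ω]))) :
    ∀ j : List Ω, j.length ≤ n → Q j ∈ Set.Icc a b := by

  have h2 : (1:ℝ) < 2 := one_lt_two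
  have key : ∀ k : ℕ, ∀ j : List Ω, j.length + k = n → Q j ∈ Set.Icc a b := by
    intro k
    induction k with
    | zero =>
      intro j hj
      rw [hQtop j (by omega)]; exact hx
    | succ k ih =>
      intro j hj
      have hlen : j.length < n := by omega
      have hchild : ∀ ω : Ω, Q (j ++ [ω]) ∈ Set.Icc a b := by
        intro ω
        exact ih _ (by simp; omega)
      have hterm : ∀ ω : Ω,
          (2:ℝ) ^ (3*s/2 + a) ≤ dcoef (j ++ [ω]) ^ ((3:ℝ)/2) * (2:ℝ) ^ Q (j ++ [ω]) ∧
          dcoef (j ++ [ω]) ^ ((3:ℝ)/2) * (2:ℝ) ^ Q (j ++ [ω]) ≤ (2:ℝ) ^ (3*t/2 + b) := by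
        intro ω
        have hpos := hdpos (j ++ [ω])
        have hdeq : dcoef (j ++ [ω]) = (2:ℝ) ^ logb 2 (dcoef (j ++ [ω])) :=
          (Real.rpow_logb two_pos (by norm_num) hpos).symm
        have hQm := hchild ω
        have e1 : dcoef (j ++ [ω]) ^ ((3:ℝ)/2) = (2:ℝ) ^ (logb 2 (dcoef (j ++ [ω])) * (3/2)) := by
          rw [Real.rpow_mul (by norm_num)]
          rw [← hdeq]
        rw [e1, ← Real.rpow_add two_pos]
        constructor
        · apply Real.rpow_le_rpow_of_exponent_le (by norm_num)
          have := hs (j ++ [ω]); have := hQm.1; linarith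
        · apply Real.rpow_le_rpow_of_exponent_le (by norm_num)
          have := ht (j ++ [ω]); have := hQm.2; linarith
      set S : ℝ := ∑ ω : Ω, dcoef (j ++ [ω]) ^ ((3:ℝ)/2) * (2:ℝ) ^ Q (j ++ [ω]) with hS
      have hcardsum : ∀ c : ℝ, (∑ _ω : Ω, c) = (2:ℝ) ^ (d:ℝ) * c := by
        intro c
        rw [Finset.sum_const, Finset.card_univ, hcard, nsmul_eq_mul]
        push_cast
        rw [Real.rpow_natCast]
      have hSlb : (2:ℝ) ^ ((d:ℝ) + (3*s/2 + a)) ≤ S := by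
        rw [Real.rpow_add two_pos, ← hcardsum]
        exact Finset.sum_le_sum (fun ω _ => (hterm ω).1)
      have hSub : S ≤ (2:ℝ) ^ ((d:ℝ) + (3*t/2 + b)) := by
        rw [Real.rpow_add two_pos, ← hcardsum]
        exact Finset.sum_le_sum (fun ω _ => (hterm ω).2)
      have hSpos : 0 < S := lt_of_lt_of_le (Real.rpow_pos_of_pos two_pos _) hSlb
      have hlog1 : (d:ℝ) + (3*s/2 + a) ≤ logb 2 S := by
        calc (d:ℝ) + (3*s/2 + a) = logb 2 ((2:ℝ) ^ ((d:ℝ) + (3*s/2 + a))) :=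
              (Real.logb_rpow two_pos (by norm_num)).symm
          _ ≤ logb 2 S := Real.logb_le_logb_of_le h2 (Real.rpow_pos_of_pos two_pos _) hSlb
      have hlog2 : logb 2 S ≤ (d:ℝ) + (3*t/2 + b) := by
        calc logb 2 S ≤ logb 2 ((2:ℝ) ^ ((d:ℝ) + (3*t/2 + b))) :=
              Real.logb_le_logb_of_le h2 hSpos hSub
          _ = (d:ℝ) + (3*t/2 + b) := Real.logb_rpow two_pos (by norm_num)
      rw [hQrec j hlen, ← hS]
      constructor
      · rw [ha]; nlinarith [hlog2]
      · rw [hb]; nlinarith [hlog1]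
  intro j hj
  exact key (n - j.length) j (by omega)
end

section
/- In the RCM with d ≥ 1, N = 2^d, α > 0, positive (δ_ω)_{ω∈Ω}, the constant solution u_j = f·2^{q|j|+q}·∏_{k≤j}√(d_k) with q = −(α+d)/3 − ℓ_{3/2}/2 satisfies, for every p ≥ 0, lim_{n→∞} (1/n)·log₂(∑_{|j|=n} u_j^p) = −p·(α/3 + d/3 + ℓ_{3/2}/2) + (p/2)·ℓ_{p/2} + d. Consequently the structure-function exponent ζ_p := min{p; d − (p/2)d − lim_n (1/n)log₂ ∑_{|j|=n} u_j^p} equals min{p; (p/3)(α − d/2) + (p/2)(ℓ_{3/2} − ℓ_{p/2})}. -/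
open Finset Real Filter

private lemma logb_rpow' {x : ℝ} (hx : 0 < x) (y : ℝ) :
    logb 2 (x ^ y) = y * logb 2 x := by
  rw [Real.logb, Real.log_rpow hx, Real.logb]; ring

/-- **Scaling of generation sums and the structure-function exponent of the RCM.**
For the constant solution `u_j = f·2^{q|j|+q}·∏_{k ≤ j}√(d_k)` (generation-`n` nodes
encoded as `Fin n → Ω`), for every `p ≥ 0`,
`(1/n)·log₂(∑_{|j|=n} u_j^p) → -p·(α/3 + d/3 + ℓ_{3/2}/2) + (p/2)·ℓ_{p/2} + d`, and
consequently `ζ_p = min{p; d - (p/2)d - lim} = min{p; (p/3)(α-d/2) + (p/2)(ℓ_{3/2} -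
ℓ_{p/2})}`. -/
theorem RCM_structure_function_exponent {Ω : Type*} [Fintype Ω]
    (d : ℕ) (hd : 1 ≤ d) (hcard : Fintype.card Ω = 2 ^ d)
    (α : ℝ) (hα : 0 < α) (δ : Ω → ℝ) (hδ : ∀ ω, 0 < δ ω) (f : ℝ) (hf : 0 < f)
    (ℓ : ℝ → ℝ)
    (hℓ : ∀ t : ℝ, t ≠ 0 → ℓ t = (1 / t) * logb 2 ((1 / (2 ^ d : ℝ)) * ∑ ω, δ ω ^ t))
    (q : ℝ) (hq : q = -(α + d) / 3 - ℓ (3 / 2) / 2)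
    (p : ℝ) (hp : 0 ≤ p)
    (L : ℝ)
    (hL : L = -p * (α / 3 + (d : ℝ) / 3 + ℓ (3 / 2) / 2) + (p / 2) * ℓ (p / 2) + d) :
    Tendsto (fun n : ℕ => (1 / (n : ℝ)) * logb 2
        (∑ j : Fin n → Ω,
          (f * (2 : ℝ) ^ (q * n + q) * ∏ i : Fin n, Real.sqrt (δ (j i))) ^ p))
      atTop (nhds L) ∧
    min p ((d : ℝ) - p / 2 * d - L) =
      min p (p / 3 * (α - (d : ℝ) / 2) + p / 2 * (ℓ (3 / 2) - ℓ (p / 2))) := by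
  have hΩ : Nonempty Ω := by
    rw [← Fintype.card_pos_iff, hcard]; positivity
  set S : ℝ := ∑ ω, δ ω ^ (p / 2) with hSdef
  have hS : 0 < S := Finset.sum_pos (fun ω _ => Real.rpow_pos_of_pos (hδ ω) _)
    Finset.univ_nonempty
  -- logb 2 of 2^d
  have hlog2d : logb 2 ((2 : ℝ) ^ d) = d := by
    rw [Real.logb_pow, Real.logb_self_eq_one (by norm_num : (1:ℝ) < 2)]; ring
  -- L = p*q + logb 2 S
  have hLeq : L = p * q + logb 2 S := by
    rcases eq_or_lt_of_le hp with hp0 | hp0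
    · subst hL hq
      have hS2 : S = (2 : ℝ) ^ d := by
        rw [hSdef]
        simp only [← hp0, zero_div, Real.rpow_zero, Finset.sum_const, Finset.card_univ,
          hcard, nsmul_eq_mul, mul_one]
        push_cast
        ring
      rw [hS2, hlog2d, ← hp0]
      ring
    · have hpne : (p / 2 : ℝ) ≠ 0 := by positivity
      have hform := hℓ (p / 2) hpne
      have hlogS : logb 2 ((1 / (2 ^ d : ℝ)) * S) = logb 2 S - d := by
        rw [one_div, Real.logb_mul (by positivity) (ne_of_gt hS), Real.logb_inv, hlog2d]
        ring
      rw [← hSdef] at hform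
      rw [hlogS] at hform
      rw [hL, hq, hform]
      field_simp
      ring
  constructor
  · -- compute the sum
    have key : ∀ n : ℕ, (∑ j : Fin n → Ω,
        (f * (2 : ℝ) ^ (q * n + q) * ∏ i : Fin n, Real.sqrt (δ (j i))) ^ p)
        = (f * (2 : ℝ) ^ (q * n + q)) ^ p * S ^ n := by
      intro n
      have hc : (0 : ℝ) < f * (2 : ℝ) ^ (q * n + q) := by positivity
      have hterm : ∀ j : Fin n → Ω,
          (f * (2 : ℝ) ^ (q * n + q) * ∏ i : Fin n, Real.sqrt (δ (j i))) ^ p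
          = (f * (2 : ℝ) ^ (q * n + q)) ^ p * ∏ i : Fin n, (δ (j i)) ^ (p / 2) := by
        intro j
        rw [Real.mul_rpow hc.le (Finset.prod_nonneg fun i _ => Real.sqrt_nonneg _)]
        congr 1
        rw [← Real.finset_prod_rpow _ _ (fun i _ => Real.sqrt_nonneg _)]
        refine Finset.prod_congr rfl fun i _ => ?_
        rw [Real.sqrt_eq_rpow, ← Real.rpow_mul (hδ (j i)).le]
        congr 1
        ring
      rw [Finset.sum_congr rfl fun j _ => hterm j, ← Finset.mul_sum]
      congr 1
      have := Finset.sum_pow' (Finset.univ : Finset Ω) (fun ω => δ ω ^ (p / 2)) n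
      rw [Fintype.piFinset_univ] at this
      exact this.symm
    have hval : ∀ n : ℕ, logb 2 (∑ j : Fin n → Ω,
        (f * (2 : ℝ) ^ (q * n + q) * ∏ i : Fin n, Real.sqrt (δ (j i))) ^ p)
        = p * (logb 2 f + (q * n + q)) + n * logb 2 S := by
      intro n
      have hc : (0 : ℝ) < f * (2 : ℝ) ^ (q * n + q) := by positivity
      rw [key n, Real.logb_mul (by positivity) (by positivity),
        logb_rpow' hc, Real.logb_pow,
        Real.logb_mul (ne_of_gt hf) (by positivity),
        Real.logb_rpow (by norm_num) (by norm_num)]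
    have heq : ∀ᶠ n : ℕ in atTop,
        ((p * logb 2 f + p * q) * (1 / (n : ℝ)) + (p * q + logb 2 S))
        = (1 / (n : ℝ)) * logb 2 (∑ j : Fin n → Ω,
          (f * (2 : ℝ) ^ (q * n + q) * ∏ i : Fin n, Real.sqrt (δ (j i))) ^ p) := by
      filter_upwards [eventually_gt_atTop 0] with n hn
      have hn' : (n : ℝ) ≠ 0 := Nat.cast_ne_zero.mpr hn.ne'
      rw [hval n]
      field_simp
      ring
    have hlim : Tendsto (fun n : ℕ =>
        (p * logb 2 f + p * q) * (1 / (n : ℝ)) + (p * q + logb 2 S))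
        atTop (nhds L) := by
      have h0 : Tendsto (fun n : ℕ => (1 / (n : ℝ))) atTop (nhds 0) :=
        tendsto_one_div_atTop_nhds_zero_nat
      have := (h0.const_mul (p * logb 2 f + p * q)).add_const (p * q + logb 2 S)
      simpa [hLeq] using this
    exact Tendsto.congr' heq hlim
  · congr 1
    rw [hL]; ring
end

section
/- With D(a) = d − γ_a·(a − ℓ_{γ_a}) (γ_a = φ^{-1}(a)) and R(a) = d + (3/2)·ℓ_{3/2} − (3/2)·a, for positive (δ_ω)_{ω∈Ω} not all equal, |Ω| = N = 2^d: R(a) ≥ D(a) for all a ∈ (log₂ min δ_ω, log₂ max δ_ω), with equality if and only if a = φ(3/2). Equivalently, for all γ ≠ 3/2, (3/2)·(ℓ_{3/2} − φ(γ)) − γ·(ℓ_γ − φ(γ)) > 0. -/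
open Finset Real

lemma key_jensen {Ω : Type*} [Fintype Ω] [Nonempty Ω]
    (δ : Ω → ℝ) (hδ : ∀ ω, 0 < δ ω) (hne : ∃ ω ω' : Ω, δ ω ≠ δ ω')
    (γ : ℝ) (h : γ ≠ 3 / 2) :
    (3 / 2 - γ) * ∑ ω, (δ ω ^ γ / ∑ v, δ v ^ γ) * Real.log (δ ω)
      < Real.log (∑ ω, δ ω ^ (3 / 2 : ℝ)) - Real.log (∑ ω, δ ω ^ γ) := by
  set S : ℝ := ∑ v, δ v ^ γ with hS
  have hSpos : 0 < S := Finset.sum_pos (fun v _ => rpow_pos_of_pos (hδ v) γ) univ_nonempty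
  have hT : (0:ℝ) < ∑ ω, δ ω ^ (3/2 : ℝ) :=
    Finset.sum_pos (fun v _ => rpow_pos_of_pos (hδ v) _) univ_nonempty
  set w : Ω → ℝ := fun ω => δ ω ^ γ / S with hw
  set p : Ω → ℝ := fun ω => (3/2 - γ) * Real.log (δ ω) with hp
  have h₀ : ∀ i ∈ Finset.univ (α := Ω), 0 < w i := fun i _ =>
    div_pos (rpow_pos_of_pos (hδ i) γ) hSpos
  have h₁ : ∑ i, w i = 1 := by
    rw [hw]; rw [← Finset.sum_div, ← hS, div_self hSpos.ne']
  have hpne : ∃ j ∈ Finset.univ (α := Ω), ∃ k ∈ Finset.univ (α := Ω), p j ≠ p k := by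
    obtain ⟨ω, ω', hωω'⟩ := hne
    refine ⟨ω, mem_univ _, ω', mem_univ _, ?_⟩
    have hlog : Real.log (δ ω) ≠ Real.log (δ ω') := fun hl =>
      hωω' (Real.log_injOn_pos (Set.mem_Ioi.2 (hδ ω)) (Set.mem_Ioi.2 (hδ ω')) hl)
    have ht : (3/2 - γ) ≠ 0 := sub_ne_zero.2 (fun hh => h hh.symm)
    exact fun hpp => hlog (mul_left_cancel₀ ht hpp)
  have hjensen := strictConvexOn_exp.map_sum_lt h₀ h₁ (fun i _ => Set.mem_univ _) hpne
  simp only [smul_eq_mul] at hjensen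
  have hexp : ∀ ω : Ω, Real.exp (p ω) = δ ω ^ (3/2 - γ : ℝ) := by
    intro ω
    rw [Real.rpow_def_of_pos (hδ ω), mul_comm]
  have hsum2 : ∑ i, w i * Real.exp (p i) = (∑ ω, δ ω ^ (3/2 : ℝ)) / S := by
    rw [Finset.sum_div]
    refine Finset.sum_congr rfl fun i _ => ?_
    rw [hexp i, hw]
    rw [div_mul_eq_mul_div, ← Real.rpow_add (hδ i)]
    norm_num
  rw [hsum2] at hjensen
  have hlt : ∑ i, w i * p i < Real.log ((∑ ω, δ ω ^ (3/2 : ℝ)) / S) :=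
    (Real.lt_log_iff_exp_lt (div_pos hT hSpos)).2 hjensen
  rw [Real.log_div hT.ne' hSpos.ne'] at hlt
  calc (3 / 2 - γ) * ∑ ω, (δ ω ^ γ / S) * Real.log (δ ω)
      = ∑ i, w i * p i := by
        rw [Finset.mul_sum]; exact Finset.sum_congr rfl fun i _ => by rw [hw, hp]; ring
    _ < _ := hlt

/-- **The rate function dominates the dimension spectrum.**  With
`ℓ_γ = (1/γ)·log₂((1/N)∑ δ_ω^γ)` (`N = 2^d`), `φ(γ) = ∑ (δ_ω^γ/∑ δ_v^γ) log₂ δ_ω`,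
`R(a) = d + (3/2)ℓ_{3/2} - (3/2)a` and `D(φ(γ)) = d - γ·(φ(γ) - ℓ_γ)`, one has
`R(a) ≥ D(a)` on `(log₂ min δ, log₂ max δ)` with equality exactly at `a = φ(3/2)`;
equivalently, for every `γ`,
`(3/2)(ℓ_{3/2} - φ(γ)) - γ(ℓ_γ - φ(γ)) ≥ 0`, with equality iff `γ = 3/2`. -/
theorem rate_dominates_dimension {Ω : Type*} [Fintype Ω] [Nonempty Ω]
    (d : ℕ) (hd : 1 ≤ d) (hcard : Fintype.card Ω = 2 ^ d)
    (δ : Ω → ℝ) (hδ : ∀ ω, 0 < δ ω) (hne : ∃ ω ω' : Ω, δ ω ≠ δ ω')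
    (ℓ : ℝ → ℝ)
    (hℓ : ∀ γ : ℝ, γ ≠ 0 →
      ℓ γ = (1 / γ) * logb 2 ((1 / (2 ^ d : ℝ)) * ∑ ω, δ ω ^ γ))
    (φ : ℝ → ℝ)
    (hφ : ∀ γ : ℝ, φ γ = ∑ ω, (δ ω ^ γ / ∑ v, δ v ^ γ) * logb 2 (δ ω)) :
    ∀ γ : ℝ,
      ((d : ℝ) + (3 / 2) * ℓ (3 / 2) - (3 / 2) * φ γ ≥ (d : ℝ) - γ * (φ γ - ℓ γ)) ∧
      (0 ≤ (3 / 2) * (ℓ (3 / 2) - φ γ) - γ * (ℓ γ - φ γ)) ∧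
      ((3 / 2) * (ℓ (3 / 2) - φ γ) - γ * (ℓ γ - φ γ) = 0 ↔ γ = 3 / 2) := by
  intro γ
  have hlog2 : (0:ℝ) < Real.log 2 := Real.log_pos one_lt_two
  have hTpos : ∀ s : ℝ, (0:ℝ) < ∑ ω, δ ω ^ s := fun s =>
    Finset.sum_pos (fun v _ => rpow_pos_of_pos (hδ v) s) univ_nonempty
  have hlogbN : logb 2 ((2:ℝ) ^ d) = d := by
    rw [← Real.rpow_natCast (2:ℝ) d, Real.logb_rpow] <;> norm_num
  have hsplit : ∀ s : ℝ,
      logb 2 ((1 / (2 ^ d : ℝ)) * ∑ ω, δ ω ^ s) = logb 2 (∑ ω, δ ω ^ s) - d := by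
    intro s
    rw [Real.logb_mul (by positivity) (hTpos s).ne', one_div, Real.logb_inv, hlogbN]
    ring
  have h32 : (3/2 : ℝ) * ℓ (3/2) = logb 2 (∑ ω, δ ω ^ (3/2 : ℝ)) - d := by
    rw [hℓ (3/2) (by norm_num), hsplit]; ring
  have hγℓ : γ * ℓ γ = logb 2 (∑ ω, δ ω ^ γ) - d := by
    rcases eq_or_ne γ 0 with rfl | h0
    · simp only [Real.rpow_zero, Finset.sum_const, card_univ, hcard, nsmul_eq_mul, mul_one,
        zero_mul]
      push_cast
      rw [hlogbN]; ring
    · rw [hℓ γ h0, hsplit]; field_simp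
  have hE : (3/2 : ℝ) * (ℓ (3/2) - φ γ) - γ * (ℓ γ - φ γ)
      = logb 2 (∑ ω, δ ω ^ (3/2 : ℝ)) - logb 2 (∑ ω, δ ω ^ γ) - (3/2 - γ) * φ γ := by
    have h : (3/2 : ℝ) * (ℓ (3/2) - φ γ) - γ * (ℓ γ - φ γ)
        = ((3/2 : ℝ) * ℓ (3/2)) - (γ * ℓ γ) - (3/2 - γ) * φ γ := by ring
    rw [h, h32, hγℓ]; ring
  have hφlog : φ γ = (∑ ω, (δ ω ^ γ / ∑ v, δ v ^ γ) * Real.log (δ ω)) / Real.log 2 := by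
    rw [hφ γ, Finset.sum_div]
    exact Finset.sum_congr rfl fun ω _ => by rw [Real.logb]; ring
  rcases eq_or_ne γ (3/2) with rfl | hγ
  · exact ⟨le_of_eq (by ring), le_of_eq (by ring), ⟨fun _ => rfl, fun _ => by ring⟩⟩
  · have hkey := key_jensen δ hδ hne γ hγ
    have hpos : 0 < (3/2 : ℝ) * (ℓ (3/2) - φ γ) - γ * (ℓ γ - φ γ) := by
      rw [hE, hφlog, Real.logb, Real.logb]
      have : Real.log (∑ ω, δ ω ^ (3/2 : ℝ)) / Real.log 2
            - Real.log (∑ ω, δ ω ^ γ) / Real.log 2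
            - (3/2 - γ) * ((∑ ω, (δ ω ^ γ / ∑ v, δ v ^ γ) * Real.log (δ ω)) / Real.log 2)
          = (Real.log (∑ ω, δ ω ^ (3/2 : ℝ)) - Real.log (∑ ω, δ ω ^ γ)
            - (3/2 - γ) * ∑ ω, (δ ω ^ γ / ∑ v, δ v ^ γ) * Real.log (δ ω)) / Real.log 2 := by
        field_simp
      rw [this]
      exact div_pos (by linarith) hlog2
    exact ⟨by linarith, le_of_lt hpos, ⟨fun h => absurd h (ne_of_gt hpos),
      fun h => absurd h hγ⟩⟩
end
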